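/- Let h be smooth with bounded second derivatives, v ≠ v_*, n a unit vector orthogonal to v − v_*. For θ = εχ define v'(ε) = v − ((v−v_*)/2)(1 − cos(εχ)) + (|v−v_*|/2) n sin(εχ) and v'_*(ε) = v_* + ((v−v_*)/2)(1 − cos(εχ)) − (|v−v_*|/2) n sin(εχ). Then as ε → 0, h(v'(ε)) + h(v'_*(ε)) − h(v) − h(v_*) = εχ (|v−v_*|/2) n · (∇h(v) − ∇h(v_*)) + O(ε²χ²), and hence [h(v') + h(v'_*) − h(v) − h(v_*)]² / ε² → χ² (|v−v_*|/2)² [n · (∇h(v) − ∇h(v_*))]². -/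

import Mathlib

open Real

section Helpers

variable {E : Type*} [NormedAddCommGroup E] [NormedSpace ℝ E]

private lemma iteratedFDeriv_one_eq' (g : E → ℝ) (x : E) :
    iteratedFDeriv ℝ 1 g x =
      (continuousMultilinearCurryFin1 ℝ E ℝ).symm (fderiv ℝ g x) := by
  ext m
  simp [iteratedFDeriv_one_apply]

private lemma fderiv_lip (g : E → ℝ) (hg : ContDiff ℝ 2 g) (C : ℝ)
    (hC : ∀ x, ‖iteratedFDeriv ℝ 2 g x‖ ≤ C) (a b : E) :
    ‖fderiv ℝ g a - fderiv ℝ g b‖ ≤ C * ‖a - b‖ := by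
  have hdiff : ∀ x ∈ (Set.univ : Set E),
      DifferentiableAt ℝ (iteratedFDeriv ℝ 1 g) x := fun x _ =>
    (hg.differentiable_iteratedFDeriv (by norm_num)).differentiableAt
  have hbound : ∀ x ∈ (Set.univ : Set E),
      ‖fderiv ℝ (iteratedFDeriv ℝ 1 g) x‖ ≤ C := fun x _ => by
    rw [norm_fderiv_iteratedFDeriv]; exact hC x
  have key := (convex_univ (𝕜 := ℝ) (E := E)).norm_image_sub_le_of_norm_fderiv_le
    hdiff hbound (Set.mem_univ b) (Set.mem_univ a)
  rwa [iteratedFDeriv_one_eq', iteratedFDeriv_one_eq', ← map_sub,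
    LinearIsometryEquiv.norm_map] at key

private lemma taylor_quad (g : E → ℝ) (hg : ContDiff ℝ 2 g) (C : ℝ)
    (hC : ∀ x, ‖iteratedFDeriv ℝ 2 g x‖ ≤ C) (x u : E) :
    |g (x + u) - g x - fderiv ℝ g x u| ≤ C * ‖u‖ ^ 2 := by
  have hC0 : 0 ≤ C := le_trans (norm_nonneg _) (hC x)
  have hdiff : ∀ y ∈ Metric.closedBall x ‖u‖, DifferentiableAt ℝ g y := fun y _ =>
    (hg.differentiable (by norm_num)).differentiableAt
  have hbound : ∀ y ∈ Metric.closedBall x ‖u‖,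
      ‖fderiv ℝ g y - fderiv ℝ g x‖ ≤ C * ‖u‖ := fun y hy => by
    refine (fderiv_lip g hg C hC y x).trans ?_
    have : ‖y - x‖ ≤ ‖u‖ := by
      rw [← dist_eq_norm]; exact hy
    exact mul_le_mul_of_nonneg_left this hC0
  have hxmem : x ∈ Metric.closedBall x ‖u‖ := Metric.mem_closedBall_self (norm_nonneg u)
  have hymem : x + u ∈ Metric.closedBall x ‖u‖ := by
    simp [Metric.mem_closedBall, dist_eq_norm]
  have key := (convex_closedBall x ‖u‖).norm_image_sub_le_of_norm_fderiv_le'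
    (y := x + u) hdiff hbound hxmem hymem
  rw [add_sub_cancel_left] at key
  calc |g (x + u) - g x - fderiv ℝ g x u|
      = ‖g (x + u) - g x - fderiv ℝ g x u‖ := (Real.norm_eq_abs _).symm
    _ ≤ C * ‖u‖ * ‖u‖ := key
    _ = C * ‖u‖ ^ 2 := by ring

private lemma sub_sin_le_half_sq (x : ℝ) (hx : 0 ≤ x) :
    x - Real.sin x ≤ x ^ 2 / 2 := by
  have hd : ∀ y : ℝ, HasDerivAt (fun y : ℝ => y ^ 2 / 2 - y + Real.sin y)
      (y - 1 + Real.cos y) y := by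
    intro y
    have h1 := ((hasDerivAt_pow 2 y).div_const 2).sub (hasDerivAt_id y)
    have h2 := h1.add (Real.hasDerivAt_sin y)
    exact h2.congr_deriv (by norm_num)
  have mono : MonotoneOn (fun y : ℝ => y ^ 2 / 2 - y + Real.sin y) (Set.Ici 0) := by
    apply monotoneOn_of_deriv_nonneg (convex_Ici 0)
    · exact (Continuous.continuousOn (by continuity))
    · intro y _
      exact (hd y).differentiableAt.differentiableWithinAt
    · intro y hy
      rw [interior_Ici] at hy
      rw [(hd y).deriv]
      rcases le_or_gt y 2 with h2 | h2
      · nlinarith [Real.one_sub_sq_div_two_le_cos (x := y), (Set.mem_Ioi.mp hy).le]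
      · nlinarith [Real.neg_one_le_cos y]
  have h0 : (0 : ℝ) ∈ Set.Ici (0 : ℝ) := Set.mem_Ici.mpr le_rfl
  have := mono h0 (Set.mem_Ici.mpr hx) hx
  simp only [Real.sin_zero] at this
  linarith

end Helpers

set_option maxHeartbeats 2000000 in
/-- Pointwise grazing-collision expansion (heart of Lemma 3.2): for `θ = εχ`,
`h(v'(ε)) + h(v'_*(ε)) - h(v) - h(v_*) = εχ (|v-v_*|/2) n·(∇h(v) - ∇h(v_*)) + O(ε²χ²)`,
and hence the rescaled squared difference converges to the Landau gradient expression. -/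
theorem grazing_collision_pointwise_expansion
    (N : ℕ) (h : EuclideanSpace ℝ (Fin N) → ℝ)
    (hh : ContDiff ℝ 2 h)
    (C₂ : ℝ) (hC₂ : ∀ x, ‖iteratedFDeriv ℝ 2 h x‖ ≤ C₂)
    (v v_st : EuclideanSpace ℝ (Fin N)) (hne : v ≠ v_st)
    (n : EuclideanSpace ℝ (Fin N)) (hn : ‖n‖ = 1)
    (horth : (inner ℝ n (v - v_st) : ℝ) = 0)
    (vp vps : ℝ → ℝ → EuclideanSpace ℝ (Fin N))
    (hvp : ∀ ε χ, vp ε χ =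
      v - (1 - Real.cos (ε * χ)) • ((2⁻¹ : ℝ) • (v - v_st)) +
        ((‖v - v_st‖ / 2) * Real.sin (ε * χ)) • n)
    (hvps : ∀ ε χ, vps ε χ =
      v_st + (1 - Real.cos (ε * χ)) • ((2⁻¹ : ℝ) • (v - v_st)) -
        ((‖v - v_st‖ / 2) * Real.sin (ε * χ)) • n) :
    (∃ C : ℝ, ∀ ε χ : ℝ, 0 < ε → ε ≤ 1 → χ ∈ Set.Icc (0 : ℝ) π →
      |h (vp ε χ) + h (vps ε χ) - h v - h v_st -
          ε * χ * (‖v - v_st‖ / 2) * (fderiv ℝ h v n - fderiv ℝ h v_st n)| ≤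
        C * ε ^ 2 * χ ^ 2) ∧
    ∀ χ : ℝ,
      Filter.Tendsto
        (fun ε => (h (vp ε χ) + h (vps ε χ) - h v - h v_st) ^ 2 / ε ^ 2)
        (nhdsWithin 0 (Set.Ioi 0))
        (nhds (χ ^ 2 * (‖v - v_st‖ / 2) ^ 2 *
          (fderiv ℝ h v n - fderiv ℝ h v_st n) ^ 2)) := by
  classical
  set w : EuclideanSpace ℝ (Fin N) := (2⁻¹ : ℝ) • (v - v_st) with hw
  set r : ℝ := ‖v - v_st‖ / 2 with hr
  set Dv := fderiv ℝ h v with hDv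
  set Dst := fderiv ℝ h v_st with hDst
  set L : ℝ := Dv n - Dst n with hL
  have hC₂0 : 0 ≤ C₂ := le_trans (norm_nonneg _) (hC₂ v)
  have hr0 : 0 ≤ r := by positivity
  constructor
  · -- quantitative expansion
    set K : ℝ := π * ‖w‖ / 2 + r with hK
    have hK0 : 0 ≤ K := by positivity
    refine ⟨2 * C₂ * K ^ 2 + (|Dv w| + |Dst w|) / 2 + r * |L| / 2, ?_⟩
    intro ε χ hε hε1 hχ
    obtain ⟨hχ0, hχπ⟩ := hχ
    set θ : ℝ := ε * χ with hθ
    have hθ0 : 0 ≤ θ := mul_nonneg hε.le hχ0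
    have hθπ : θ ≤ π := by
      calc θ ≤ 1 * χ := mul_le_mul_of_nonneg_right hε1 hχ0
      _ = χ := one_mul χ
      _ ≤ π := hχπ
    set a : ℝ := 1 - Real.cos θ with ha
    set b : ℝ := r * Real.sin θ with hb
    have ha0 : 0 ≤ a := by
      have := Real.cos_le_one θ; simp [ha]; linarith
    have ha_sq : a ≤ θ ^ 2 / 2 := by
      have := Real.one_sub_sq_div_two_le_cos (x := θ); simp [ha]; linarith
    have ha_lin : a ≤ θ * π / 2 := by
      have : θ ^ 2 / 2 ≤ θ * π / 2 := by nlinarith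
      linarith
    have hsin_abs : |Real.sin θ| ≤ θ := by
      calc |Real.sin θ| ≤ |θ| := Real.abs_sin_le_abs
      _ = θ := abs_of_nonneg hθ0
    have hsin_close : |Real.sin θ - θ| ≤ θ ^ 2 / 2 := by
      have h1 : Real.sin θ ≤ θ := Real.sin_le hθ0
      have h2 : θ - Real.sin θ ≤ θ ^ 2 / 2 := sub_sin_le_half_sq θ hθ0
      rw [abs_sub_comm, abs_of_nonneg (by linarith)]
      exact h2
    set u : EuclideanSpace ℝ (Fin N) := -(a • w) + b • n with hu
    have hvpu : vp ε χ = v + u := by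
      rw [hvp ε χ, hu, ha, hb, hw, hr, hθ]; abel
    have hvpsu : vps ε χ = v_st + (-u) := by
      rw [hvps ε χ, hu, ha, hb, hw, hr, hθ]
      simp only [neg_add_rev, neg_neg]
      abel
    have hnormu : ‖u‖ ≤ θ * K := by
      calc ‖u‖ ≤ ‖-(a • w)‖ + ‖b • n‖ := norm_add_le _ _
      _ = a * ‖w‖ + r * |Real.sin θ| := by
          have e1 : ‖-(a • w)‖ = a * ‖w‖ := by
            rw [norm_neg, norm_smul a w, Real.norm_eq_abs, abs_of_nonneg ha0]
          have e2 : ‖b • n‖ = r * |Real.sin θ| := by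
            rw [norm_smul b n, hn, mul_one, Real.norm_eq_abs, hb, abs_mul,
              abs_of_nonneg hr0]
          rw [e1, e2]
      _ ≤ (θ * π / 2) * ‖w‖ + r * θ := by
          gcongr
      _ = θ * K := by rw [hK]; ring
    have hnormu_sq : ‖u‖ ^ 2 ≤ θ ^ 2 * K ^ 2 := by
      calc ‖u‖ ^ 2 ≤ (θ * K) ^ 2 := by
            apply pow_le_pow_left₀ (norm_nonneg u) hnormu
      _ = θ ^ 2 * K ^ 2 := by ring
    have T1 : |h (v + u) - h v - Dv u| ≤ C₂ * ‖u‖ ^ 2 :=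
      taylor_quad h hh C₂ hC₂ v u
    have T2 : |h (v_st + (-u)) - h v_st - Dst (-u)| ≤ C₂ * ‖u‖ ^ 2 := by
      have := taylor_quad h hh C₂ hC₂ v_st (-u)
      simpa [norm_neg] using this
    have hDvu : Dv u = -(a * Dv w) + b * Dv n := by
      rw [hu]; simp [map_add, map_neg, map_smul, smul_eq_mul]
    have hDstu : Dst (-u) = a * Dst w - b * Dst n := by
      rw [hu]; simp [map_add, map_neg, map_smul, smul_eq_mul]; ring
    -- linear-term error
    have lin_err : |Dv u + Dst (-u) - θ * r * L| ≤
        θ ^ 2 / 2 * (|Dv w| + |Dst w|) + r * (θ ^ 2 / 2) * |L| := by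
      have heq : Dv u + Dst (-u) - θ * r * L
          = -(a * (Dv w)) + a * (Dst w) + r * (Real.sin θ - θ) * L := by
        rw [hDvu, hDstu, hL, hb]; ring
      rw [heq]
      calc |(-(a * (Dv w)) + a * (Dst w)) + r * (Real.sin θ - θ) * L|
          ≤ |(-(a * (Dv w)) + a * (Dst w))| + |r * (Real.sin θ - θ) * L| := abs_add_le _ _
        _ ≤ (|a * (Dv w)| + |a * (Dst w)|) + |r * (Real.sin θ - θ) * L| := by
            gcongr; exact (abs_add_le _ _).trans (by rw [abs_neg])
        _ = a * |Dv w| + a * |Dst w| + r * |Real.sin θ - θ| * |L| := by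
            rw [abs_mul, abs_mul, abs_mul, abs_mul, abs_of_nonneg ha0,
              abs_of_nonneg hr0]
        _ ≤ (θ ^ 2 / 2) * |Dv w| + (θ ^ 2 / 2) * |Dst w| + r * (θ ^ 2 / 2) * |L| := by
            gcongr
            all_goals first | exact abs_nonneg _ | exact hsin_close | positivity
        _ = θ ^ 2 / 2 * (|Dv w| + |Dst w|) + r * (θ ^ 2 / 2) * |L| := by ring
    have decomp : h (vp ε χ) + h (vps ε χ) - h v - h v_st - ε * χ * r * L
        = (h (v + u) - h v - Dv u) + (h (v_st + (-u)) - h v_st - Dst (-u)) +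
          (Dv u + Dst (-u) - θ * r * L) := by
      rw [hvpu, hvpsu, hθ]; ring
    rw [show ε * χ * (‖v - v_st‖ / 2) * (fderiv ℝ h v n - fderiv ℝ h v_st n)
        = ε * χ * r * L from by rw [hr, hL, hDv, hDst]]
    rw [decomp]
    have habs : |(h (v + u) - h v - Dv u) + (h (v_st + (-u)) - h v_st - Dst (-u)) +
          (Dv u + Dst (-u) - θ * r * L)|
        ≤ C₂ * ‖u‖ ^ 2 + C₂ * ‖u‖ ^ 2 +
          (θ ^ 2 / 2 * (|Dv w| + |Dst w|) + r * (θ ^ 2 / 2) * |L|) := by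
      calc _ ≤ |(h (v + u) - h v - Dv u) + (h (v_st + (-u)) - h v_st - Dst (-u))| +
            |Dv u + Dst (-u) - θ * r * L| := abs_add_le _ _
        _ ≤ (|h (v + u) - h v - Dv u| + |h (v_st + (-u)) - h v_st - Dst (-u)|) +
            |Dv u + Dst (-u) - θ * r * L| := by gcongr; exact abs_add_le _ _
        _ ≤ _ := by gcongr
    refine habs.trans ?_
    have hfin : C₂ * ‖u‖ ^ 2 ≤ C₂ * (θ ^ 2 * K ^ 2) :=
      mul_le_mul_of_nonneg_left hnormu_sq hC₂0
    calc C₂ * ‖u‖ ^ 2 + C₂ * ‖u‖ ^ 2 +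
          (θ ^ 2 / 2 * (|Dv w| + |Dst w|) + r * (θ ^ 2 / 2) * |L|)
        ≤ (2 * C₂ * K ^ 2 + (|Dv w| + |Dst w|) / 2 + r * |L| / 2) * θ ^ 2 := by
          have e : θ ^ 2 / 2 * (|Dv w| + |Dst w|) + r * (θ ^ 2 / 2) * |L|
              = ((|Dv w| + |Dst w|) / 2 + r * |L| / 2) * θ ^ 2 := by ring
          refine le_trans (add_le_add (add_le_add hfin hfin) (le_of_eq e))
            (le_of_eq ?_)
          ring
      _ = (2 * C₂ * K ^ 2 + (|Dv w| + |Dst w|) / 2 + r * |L| / 2) * ε ^ 2 * χ ^ 2 := by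
          rw [hθ]; ring
  · -- limit statement
    intro χ
    set F : ℝ → EuclideanSpace ℝ (Fin N) := fun ε => v - (1 - Real.cos (ε * χ)) • w +
        (r * Real.sin (ε * χ)) • n with hF
    set G : ℝ → EuclideanSpace ℝ (Fin N) := fun ε => v_st + (1 - Real.cos (ε * χ)) • w -
        (r * Real.sin (ε * χ)) • n with hG
    have hθd : HasDerivAt (fun ε : ℝ => ε * χ) χ 0 := hasDerivAt_mul_const χ
    have hcosd : HasDerivAt (fun ε : ℝ => 1 - Real.cos (ε * χ))
        (0 - -Real.sin (0 * χ) * χ) 0 := (hasDerivAt_const 0 (1 : ℝ)).sub hθd.cos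
    have hsind : HasDerivAt (fun ε : ℝ => r * Real.sin (ε * χ))
        (r * (Real.cos (0 * χ) * χ)) 0 := hθd.sin.const_mul r
    have hFd : HasDerivAt F ((r * χ) • n) 0 := by
      have := ((hasDerivAt_const (0 : ℝ) v).sub (hcosd.smul_const w)).add
        (hsind.smul_const n)
      refine this.congr_deriv ?_
      simp
    have hGd : HasDerivAt G (-((r * χ) • n)) 0 := by
      have := ((hasDerivAt_const (0 : ℝ) v_st).add (hcosd.smul_const w)).sub
        (hsind.smul_const n)
      refine this.congr_deriv ?_
      simp
    have hF0 : F 0 = v := by simp [hF]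
    have hG0 : G 0 = v_st := by simp [hG]
    have hhv : HasFDerivAt h Dv (F 0) := by
      rw [hF0, hDv]
      exact ((hh.differentiable (by norm_num)) v).hasFDerivAt
    have hhvst : HasFDerivAt h Dst (G 0) := by
      rw [hG0, hDst]
      exact ((hh.differentiable (by norm_num)) v_st).hasFDerivAt
    have hcomp1 : HasDerivAt (fun ε => h (F ε)) (Dv ((r * χ) • n)) 0 :=
      hhv.comp_hasDerivAt 0 hFd
    have hcomp2 : HasDerivAt (fun ε => h (G ε)) (Dst (-((r * χ) • n))) 0 :=
      hhvst.comp_hasDerivAt 0 hGd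
    set f : ℝ → ℝ := fun ε => h (F ε) + h (G ε) with hf
    have hfd : HasDerivAt f (r * χ * L) 0 := by
      have := hcomp1.add hcomp2
      refine this.congr_deriv ?_
      symm
      rw [hL]
      simp [map_smul, map_neg, smul_eq_mul]
      ring
    have hslope : Filter.Tendsto (slope f 0) (nhdsWithin 0 {(0 : ℝ)}ᶜ)
        (nhds (r * χ * L)) := hasDerivAt_iff_tendsto_slope.mp hfd
    have hslope' : Filter.Tendsto (slope f 0) (nhdsWithin 0 (Set.Ioi 0))
        (nhds (r * χ * L)) :=
      hslope.mono_left (nhdsWithin_mono 0 (fun x hx => Set.mem_compl_singleton_iff.mpr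
        (ne_of_gt hx)))
    have hsq : Filter.Tendsto (fun ε => (slope f 0 ε) ^ 2)
        (nhdsWithin 0 (Set.Ioi 0)) (nhds ((r * χ * L) ^ 2)) := hslope'.pow 2
    have hfun : (fun ε => (h (vp ε χ) + h (vps ε χ) - h v - h v_st) ^ 2 / ε ^ 2)
        = fun ε => (slope f 0 ε) ^ 2 := by
      funext ε
      have h1 : vp ε χ = F ε := by rw [hvp ε χ]
      have h2 : vps ε χ = G ε := by rw [hvps ε χ]
      rw [h1, h2, slope_def_field]
      have hf0 : f 0 = h v + h v_st := by
        simp only [hf]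
        rw [hF0, hG0]
      rw [div_pow]
      congr 1
      · rw [hf0]
        simp only [hf]
        ring
      · rw [sub_zero]
    rw [hfun]
    have htgt : (r * χ * L) ^ 2 = χ ^ 2 * (‖v - v_st‖ / 2) ^ 2 *
        (fderiv ℝ h v n - fderiv ℝ h v_st n) ^ 2 := by
      rw [hr, hL, hDv, hDst]; ring
    rw [← htgt]
    exact hsq
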